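/- The unique sequence (a_n)_{n≥1} with a_1 = 1 satisfying, for all n ≥ 1, a_{n+1} = (1/(n+1)) Σ_{partitions 1^{r_1}···n^{r_n} of n} multinomial(n+1; n+1-Σr_i, r_1,...,r_n) a_1^{r_1} ··· a_n^{r_n}, coincides with the left-shift eigensequence for self-composition, i.e., its generating function A(x) satisfies A(A(x)) = (A(x)-x)/x. -/

import Mathlib

/-!
Put `Φ = 1 + A`. By the multinomial theorem the recurrence says `(n + 1) a_{n+1} = [x^n] Φ^{n+1}`
for all `n`, which is Lagrange's inversion formula for the solution `Q` of `Q = x Φ(Q)`; such a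
`Q` exists, being the compositional inverse of `x / Φ`. Hence `A = Q`, that is
`A = x (1 + A(A))`.

Lagrange's formula is a residue computation. Write `Q = x V`. For `k ≤ m` the coefficient of
`x^m` in `Q^k V^{-(m+1)} Q'` is `[x^j] V^{-(j+1)} (x V)'` with `j = m - k`, which vanishes for
`j > 0` because `j V^{-(j+1)} (x V)' = j V^{-j} - x (V^{-j})'`; for `k > m` it vanishes trivially.
Hence `[x^m] F(Q) V^{-(m+1)} Q' = [x^m] F` for every `F`, and for `F = Φ^{m+1}` the left side is
`[x^m] Q' = (m + 1) [x^{m+1}] Q`.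
-/

/-- Composition `f ∘ g` (i.e. `f(g(x))`) of formal power series, valid when `g`
has zero constant term. -/
noncomputable def psComp {R : Type*} [CommSemiring R] (f g : PowerSeries R) : PowerSeries R :=
  PowerSeries.mk fun n =>
    ∑ k ∈ Finset.range (n + 1), PowerSeries.coeff k f * PowerSeries.coeff n (g ^ k)

/-- The Lagrange-inversion partition sum
`∑ multinomial(n+1; n+1-∑rᵢ, r₁,…,rₙ) a₁^{r₁} ⋯ aₙ^{rₙ}` over all
`r₁,…,rₙ ≥ 0` with `∑ i·rᵢ = n` (each `rᵢ ≤ n` automatically). -/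
noncomputable def pSum (n : ℕ) (a : ℕ → ℚ) : ℚ :=
  ∑ r ∈ Finset.univ.filter
      (fun r : Fin n → Fin (n + 1) => ∑ i, (i.1 + 1) * (r i).1 = n),
    ((Nat.factorial (n + 1) : ℚ) /
        ((Nat.factorial (n + 1 - ∑ i, (r i).1) : ℚ) * ∏ i, (Nat.factorial (r i).1 : ℚ))) *
      ∏ i, a (i.1 + 1) ^ (r i).1

open PowerSeries Finset

theorem le_of_sum_mul_eq {ι : Type*} {s : Finset ι} {w κ : ι → ℕ} {n : ℕ}
    (h : ∑ i ∈ s, w i * κ i = n) {i : ι} (hi : i ∈ s) (hw : w i ≠ 0) : κ i ≤ n :=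
  calc κ i ≤ w i * κ i := Nat.le_mul_of_pos_left _ (Nat.pos_of_ne_zero hw)
    _ ≤ n := h ▸ single_le_sum (fun j _ => Nat.zero_le (w j * κ j)) hi

theorem sum_le_of_sum_mul_eq {ι : Type*} {s : Finset ι} {w κ : ι → ℕ} {n : ℕ}
    (h : ∑ i ∈ s, w i * κ i = n) (hw : ∀ i ∈ s, w i ≠ 0) : ∑ i ∈ s, κ i ≤ n :=
  (sum_le_sum fun i hi => Nat.le_mul_of_pos_left _ (Nat.pos_of_ne_zero (hw i hi))).trans_eq h

theorem cast_multinomial_fin_cons {K : Type*} [Field K] [CharZero K] {n : ℕ} (k₀ : ℕ)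
    (r : Fin n → ℕ) :
    (Nat.multinomial univ (Fin.cons k₀ r : Fin (n + 1) → ℕ) : K) =
      (k₀ + ∑ i, r i).factorial / (k₀.factorial * ∏ i, ((r i).factorial : K)) := by
  have h := Nat.multinomial_spec univ (Fin.cons k₀ r : Fin (n + 1) → ℕ)
  simp only [Fin.prod_univ_succ, Fin.sum_univ_succ, Fin.cons_zero, Fin.cons_succ] at h
  rw [eq_div_iff (mul_ne_zero (Nat.cast_ne_zero.2 k₀.factorial_ne_zero)
    (prod_ne_zero_iff.2 fun i _ => Nat.cast_ne_zero.2 (r i).factorial_ne_zero))]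
  exact_mod_cast (mul_comm _ _).trans h

theorem pSum_eq_sum_piAntidiag (n : ℕ) (a : ℕ → ℚ) :
    pSum n a = ∑ κ ∈ (piAntidiag univ (n + 1)).filter
        (fun κ : Fin (n + 1) → ℕ => ∑ i : Fin (n + 1), (i : ℕ) * κ i = n),
      (Nat.multinomial univ κ : ℚ) * ∏ i : Fin (n + 1), (if (i : ℕ) = 0 then 1 else a i) ^ κ i := by
  have hσ {r : Fin n → Fin (n + 1)} (hr : ∑ i, (i.1 + 1) * (r i).1 = n) : ∑ i, (r i : ℕ) ≤ n :=
    sum_le_of_sum_mul_eq hr fun i _ => i.1.succ_ne_zero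
  have hle {κ : Fin (n + 1) → ℕ} (hκ : ∑ i : Fin (n + 1), (i : ℕ) * κ i = n) (i : Fin n) :
      κ i.succ ≤ n :=
    le_of_sum_mul_eq hκ (mem_univ _) (by simp)
  refine sum_nbij' (fun r => Fin.cons (n + 1 - ∑ i, (r i : ℕ)) fun i => (r i : ℕ))
    (fun κ i => ⟨min (κ i.succ) n, by omega⟩) ?_ ?_ ?_ ?_ ?_
  · intro r hr
    rw [mem_filter] at hr
    simp [Fin.sum_univ_succ, hr.2, Nat.sub_add_cancel (Nat.le_succ_of_le (hσ hr.2))]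
  · intro κ hκ
    rw [mem_filter] at hκ ⊢
    simpa [Fin.sum_univ_succ, hle hκ.2] using hκ.2
  · rintro r -
    funext i
    simp [(r i).is_le]
  · intro κ hκ
    simp only [mem_filter, mem_piAntidiag, mem_univ, ne_eq, imp_true_iff, and_true] at hκ
    obtain ⟨hsum, hweight⟩ := hκ
    rw [Fin.sum_univ_succ] at hsum
    funext i
    refine Fin.cases ?_ (fun i => ?_) i
    · simp [hle hweight]
      omega
    · simp [hle hweight]
  · intro r hr
    rw [mem_filter] at hr
    simp [cast_multinomial_fin_cons, Fin.prod_univ_succ,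
      Nat.sub_add_cancel (Nat.le_succ_of_le (hσ hr.2))]

theorem coeff_pow_eq_coeff_sum_range_pow {R : Type*} [CommRing R] (F : R⟦X⟧) (n k : ℕ) :
    coeff n (F ^ k) = coeff n ((∑ i ∈ range (n + 1), C (coeff i F) * X ^ i) ^ k) := by
  have hF : X ^ (n + 1) ∣ F - ∑ i ∈ range (n + 1), C (coeff i F) * X ^ i := by
    refine X_pow_dvd_iff.2 fun j hj => ?_
    simp [hj]
  rw [← sub_eq_zero, ← map_sub]
  exact X_pow_dvd_iff.1 (hF.trans (sub_dvd_pow_sub_pow _ _ k)) n n.lt_succ_self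

theorem coeff_sum_C_mul_X_pow_pow {R ι : Type*} [CommRing R] [DecidableEq ι] (s : Finset ι)
    (c : ι → R) (e : ι → ℕ) (k n : ℕ) :
    coeff n ((∑ i ∈ s, C (c i) * X ^ e i) ^ k) =
      ∑ κ ∈ (piAntidiag s k).filter (fun κ => ∑ i ∈ s, e i * κ i = n),
        (Nat.multinomial s κ : R) * ∏ i ∈ s, c i ^ κ i := by
  simp only [sum_pow_eq_sum_piAntidiag, map_sum, sum_filter, mul_pow, ← map_pow, ← pow_mul,
    prod_mul_distrib, ← map_prod, prod_pow_eq_pow_sum, ← map_natCast C, ← mul_assoc, ← map_mul,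
    coeff_C_mul_X_pow]
  refine sum_congr rfl fun κ _ => ?_
  simp only [mul_comm (e _), eq_comm]

theorem pSum_eq_coeff_pow (n : ℕ) (a : ℕ → ℚ) :
    pSum n a = coeff n ((1 + mk fun i => if i = 0 then 0 else a i) ^ (n + 1)) := by
  rw [coeff_pow_eq_coeff_sum_range_pow, ← Fin.sum_univ_eq_sum_range, coeff_sum_C_mul_X_pow_pow,
    pSum_eq_sum_piAntidiag]
  refine sum_congr rfl fun κ _ => ?_
  congr! 3 with i
  split_ifs with hi <;> simp [hi, coeff_one]

theorem psComp_eq_subst {R : Type*} [CommRing R] (f : R⟦X⟧) {g : R⟦X⟧}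
    (hg : constantCoeff g = 0) : psComp f g = f.subst g := by
  ext n
  rw [psComp, coeff_mk, coeff_subst' (HasSubst.of_constantCoeff_zero' hg),
    finsum_eq_sum_of_support_subset (s := range (n + 1))]
  · simp only [smul_eq_mul]
  · intro d hd
    rw [Function.mem_support] at hd
    rw [coe_range, Set.mem_Iio, Nat.lt_succ_iff]
    by_contra! hnd
    exact hd (by rw [X_pow_dvd_iff.1 (pow_dvd_pow_of_dvd (X_dvd_iff.2 hg) d) n hnd, smul_zero])

theorem constantCoeff_subst_of_constantCoeff_eq_zero {R : Type*} [CommRing R] {Q : R⟦X⟧}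
    (hQ : constantCoeff Q = 0) (f : R⟦X⟧) : constantCoeff (f.subst Q) = constantCoeff f := by
  rw [← coeff_zero_eq_constantCoeff_apply, coeff_subst' (HasSubst.of_constantCoeff_zero' hQ),
    finsum_eq_single _ 0]
  · simp
  · intro d hd
    simp [zero_pow hd, hQ]

theorem exists_eq_X_mul_subst {K : Type*} [Field K] {Φ : K⟦X⟧} (hΦ : constantCoeff Φ ≠ 0) :
    ∃ Q : K⟦X⟧, Q = X * Φ.subst Q := by
  set P : K⟦X⟧ := X * Φ⁻¹
  have hP0 : constantCoeff P = 0 := by simp [P]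
  have hP1 : IsUnit (coeff 1 P) := by simpa [P, coeff_succ_X_mul] using hΦ
  set Q := P.substInvOfIsUnit hP1
  have hQ : HasSubst Q := HasSubst.substInvOfIsUnit P hP1
  have hPQ : Q * Φ⁻¹.subst Q = X := by
    have h := subst_substInvOfIsUnit_right P hP0 hP1
    rwa [subst_mul hQ, subst_X hQ] at h
  have hΦQ : Φ⁻¹.subst Q * Φ.subst Q = 1 := by
    rw [← subst_mul hQ, PowerSeries.inv_mul_cancel Φ hΦ, ← coe_substAlgHom hQ, map_one]
  exact ⟨Q, by rw [← hPQ, mul_assoc, hΦQ, mul_one]⟩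

section Lagrange

variable {K : Type*} [Field K] [CharZero K] {V : K⟦X⟧}

theorem coeff_inv_pow_succ_mul_derivative_X_mul (hV : constantCoeff V ≠ 0) (j : ℕ) :
    coeff j (V⁻¹ ^ (j + 1) * d⁄dX K (X * V)) = if j = 0 then 1 else 0 := by
  have hVV : V⁻¹ * V = 1 := PowerSeries.inv_mul_cancel V hV
  rcases j with _ | m
  · simp [Derivation.leibniz, hV]
  · have key : ((m + 1 : ℕ) : K⟦X⟧) * (V⁻¹ ^ (m + 1 + 1) * d⁄dX K (X * V))
        = ((m + 1 : ℕ) : K⟦X⟧) * V⁻¹ ^ (m + 1) - X * d⁄dX K (V⁻¹ ^ (m + 1)) := by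
      rw [derivative_pow, derivative_inv', Derivation.leibniz, derivative_X]
      simp only [smul_eq_mul, Nat.add_sub_cancel]
      linear_combination ((m + 1 : ℕ) : K⟦X⟧) * V⁻¹ ^ (m + 1) * hVV
    have h := congrArg (coeff (m + 1)) key
    rw [← map_natCast C, coeff_C_mul, map_sub, coeff_C_mul, coeff_succ_X_mul,
      coeff_derivative] at h
    push_cast at h
    rw [if_neg m.succ_ne_zero]
    refine (mul_eq_zero.1 ?_).resolve_left (Nat.cast_add_one_ne_zero m)
    linear_combination h

theorem coeff_X_mul_pow_mul_inv_pow_mul_derivative (hV : constantCoeff V ≠ 0) (k m : ℕ) :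
    coeff m ((X * V) ^ k * (V⁻¹ ^ (m + 1) * d⁄dX K (X * V))) = if k = m then 1 else 0 := by
  rw [mul_pow, mul_assoc, coeff_X_pow_mul']
  by_cases hkm : k ≤ m
  · obtain ⟨t, rfl⟩ := Nat.exists_eq_add_of_le hkm
    rw [if_pos hkm, add_assoc, pow_add, ← mul_assoc, ← mul_assoc, ← mul_pow,
      PowerSeries.mul_inv_cancel V hV, one_pow, one_mul, Nat.add_sub_cancel_left,
      coeff_inv_pow_succ_mul_derivative_X_mul hV]
    simp
  · rw [if_neg hkm, if_neg (by omega)]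

theorem coeff_subst_X_mul_mul_inv_pow_mul_derivative (hV : constantCoeff V ≠ 0)
    (F : K⟦X⟧) (m : ℕ) :
    coeff m (F.subst (X * V) * (V⁻¹ ^ (m + 1) * d⁄dX K (X * V))) = coeff m F := by
  have hQ : HasSubst (X * V) := HasSubst.of_constantCoeff_zero' (by simp)
  nth_rewrite 1 [eq_X_pow_mul_shift_add_trunc (m + 1) F]
  rw [subst_add hQ, subst_mul hQ, subst_pow hQ, subst_X hQ, subst_coe hQ,
    Polynomial.aeval_eq_sum_range' (natDegree_trunc_lt F m), add_mul, map_add, mul_assoc,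
    mul_pow, mul_assoc, coeff_X_pow_mul', if_neg (by omega), zero_add]
  simp only [sum_mul, map_sum, smul_mul_assoc, map_smul, smul_eq_mul,
    coeff_X_mul_pow_mul_inv_pow_mul_derivative hV, mul_ite, mul_one, mul_zero, sum_ite_eq',
    mem_range, coeff_trunc, lt_add_one, if_true]

theorem coeff_succ_mul_of_eq_X_mul_subst {Φ Q : K⟦X⟧} (hΦ : constantCoeff Φ ≠ 0)
    (hQ : Q = X * Φ.subst Q) (m : ℕ) :
    coeff (m + 1) Q * (m + 1) = coeff m (Φ ^ (m + 1)) := by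
  have hQ0 : constantCoeff Q = 0 := by rw [hQ]; simp
  have hV : constantCoeff (Φ.subst Q) ≠ 0 := by
    rwa [constantCoeff_subst_of_constantCoeff_eq_zero hQ0]
  have h := coeff_subst_X_mul_mul_inv_pow_mul_derivative hV (Φ ^ (m + 1)) m
  rwa [← hQ, subst_pow (HasSubst.of_constantCoeff_zero' hQ0), ← mul_assoc, ← mul_pow,
    PowerSeries.mul_inv_cancel _ hV, one_pow, one_mul, coeff_derivative] at h

theorem eq_X_mul_subst_of_coeff_succ_mul {Φ A : K⟦X⟧} (hΦ : constantCoeff Φ ≠ 0)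
    (hA0 : constantCoeff A = 0) (hA : ∀ m : ℕ, coeff (m + 1) A * (m + 1) = coeff m (Φ ^ (m + 1))) :
    A = X * Φ.subst A := by
  obtain ⟨Q, hQ⟩ := exists_eq_X_mul_subst hΦ
  have hQ0 : constantCoeff Q = 0 := by rw [hQ]; simp
  have hAQ : A = Q := by
    ext (_ | m)
    · simp only [coeff_zero_eq_constantCoeff_apply, hA0, hQ0]
    · rw [← mul_left_inj' (Nat.cast_add_one_ne_zero (R := K) m), hA,
        coeff_succ_mul_of_eq_X_mul_subst hΦ hQ]
  rwa [hAQ]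

end Lagrange

/-- The unique sequence with `a₁ = 1` satisfying the Lagrange-inversion
recurrence is the left-shift eigensequence for self-composition: its
generating function satisfies `A(A(x)) = (A(x)-x)/x`. -/
theorem fixedPoint_eq_eigensequence (a : ℕ → ℚ) (h1 : a 1 = 1)
    (hrec : ∀ n : ℕ, 1 ≤ n → a (n + 1) = (1 / (n + 1 : ℚ)) * pSum n a)
    (A : PowerSeries ℚ) (hA : A = PowerSeries.mk fun n => if n = 0 then 0 else a n) :
    PowerSeries.X * psComp A A = A - PowerSeries.X := by
  have hA0 : constantCoeff A = 0 := by simp [hA]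
  have hlagrange (m : ℕ) : coeff (m + 1) A * (m + 1) = coeff m ((1 + A) ^ (m + 1)) := by
    rcases Nat.eq_zero_or_pos m with rfl | hm
    · simp [hA, h1]
    · rw [hA, ← pSum_eq_coeff_pow, coeff_mk, if_neg m.succ_ne_zero, hrec m hm]
      field_simp
  have hfix := eq_X_mul_subst_of_coeff_succ_mul (by simp [hA0]) hA0 hlagrange
  have hsubst : HasSubst A := HasSubst.of_constantCoeff_zero' hA0
  rw [subst_add hsubst, ← coe_substAlgHom hsubst, map_one, coe_substAlgHom] at hfix
  rw [psComp_eq_subst A hA0]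
  linear_combination -hfix
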